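/- arXiv:1806.03414 — 11 statements merged into one kernel-verified Lean document; each statement's English description precedes it below -/
import Mathlib

section
/- For a linear operator T on a vector space X and every nonnegative integer n, the dimension of the quotient space N(T^{n+1})/N(T^n) equals the dimension of the subspace N(T) ∩ R(T^n), where N denotes the kernel and R the range. -/
/-- For a linear operator `T` on a vector space `X` and every `n`,
`dim (N(T^{n+1}) / N(T^n)) = dim (N(T) ⊓ R(T^n))`. -/
theorem kernel_quotient_rank_eq_ker_inf_range
    {K : Type*} [Field K] {X : Type*} [AddCommGroup X] [Module K X]
    (T : Module.End K X) (n : ℕ) :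
    Module.rank K
      (↥(LinearMap.ker (T ^ (n + 1))) ⧸
        (LinearMap.ker (T ^ n)).comap (LinearMap.ker (T ^ (n + 1))).subtype) =
    Module.rank K ↥(LinearMap.ker T ⊓ LinearMap.range (T ^ n)) := by
  set g : ↥(LinearMap.ker (T ^ (n + 1))) →ₗ[K] X :=
    (T ^ n : Module.End K X).comp (LinearMap.ker (T ^ (n + 1))).subtype with hg
  have hmem : ∀ x : ↥(LinearMap.ker (T ^ (n + 1))),
      g x ∈ LinearMap.ker T ⊓ LinearMap.range (T ^ n) := by
    intro x
    refine ⟨?_, ⟨x, rfl⟩⟩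
    have hx := x.2
    simp only [LinearMap.mem_ker] at hx ⊢
    have h2 := LinearMap.congr_fun (pow_succ' T n) (x : X)
    rw [hx] at h2
    simpa [hg, Module.End.mul_apply] using h2.symm
  set f : ↥(LinearMap.ker (T ^ (n + 1))) →ₗ[K] ↥(LinearMap.ker T ⊓ LinearMap.range (T ^ n)) :=
    g.codRestrict _ hmem with hf
  have hker : LinearMap.ker f =
      (LinearMap.ker (T ^ n)).comap (LinearMap.ker (T ^ (n + 1))).subtype := by
    ext x
    simp [hf, hg, LinearMap.mem_ker, LinearMap.ker_codRestrict]
  have hsurj : Function.Surjective f := by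
    rintro ⟨y, hy1, ⟨x, hx⟩⟩
    have hxk : x ∈ LinearMap.ker (T ^ (n + 1)) := by
      simp only [LinearMap.mem_ker] at hy1 ⊢
      rw [pow_succ']
      show T ((T ^ n) x) = 0
      rw [hx]; exact hy1
    refine ⟨⟨x, hxk⟩, ?_⟩
    apply Subtype.ext
    simpa [hf, hg] using hx
  rw [← hker]
  exact (f.quotKerEquivOfSurjective hsurj).rank_eq
end

section
/- For a linear operator T on a vector space X, the sequence n ↦ dim(N(T^{n+1})/N(T^n)) is decreasing, i.e. dim(N(T^{n+2})/N(T^{n+1})) ≤ dim(N(T^{n+1})/N(T^n)) for all n (in the sense of cardinal/extended-natural dimensions). -/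
/-- The sequence `n ↦ dim (N(T^{n+1}) / N(T^n))` is decreasing. -/
theorem kernel_quotient_rank_antitone
    {K : Type*} [Field K] {X : Type*} [AddCommGroup X] [Module K X]
    (T : Module.End K X) (n : ℕ) :
    Module.rank K
      (↥(LinearMap.ker (T ^ (n + 2))) ⧸
        (LinearMap.ker (T ^ (n + 1))).comap (LinearMap.ker (T ^ (n + 2))).subtype) ≤
    Module.rank K
      (↥(LinearMap.ker (T ^ (n + 1))) ⧸
        (LinearMap.ker (T ^ n)).comap (LinearMap.ker (T ^ (n + 1))).subtype) := by
  -- T maps ker (T^(n+2)) into ker (T^(n+1))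
  have hmap : ∀ x ∈ LinearMap.ker (T ^ (n + 2)), T x ∈ LinearMap.ker (T ^ (n + 1)) := by
    intro x hx
    simp only [LinearMap.mem_ker] at hx ⊢
    have : (T ^ (n + 1) * T) x = 0 := by rw [← pow_succ]; exact hx
    simpa [Module.End.mul_apply] using this
  set f : ↥(LinearMap.ker (T ^ (n + 2))) →ₗ[K] ↥(LinearMap.ker (T ^ (n + 1))) :=
    (T : X →ₗ[K] X).restrict hmap with hf
  set p₂ := (LinearMap.ker (T ^ (n + 1))).comap (LinearMap.ker (T ^ (n + 2))).subtype
  set p₁ := (LinearMap.ker (T ^ n)).comap (LinearMap.ker (T ^ (n + 1))).subtype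
  set φ : ↥(LinearMap.ker (T ^ (n + 2))) →ₗ[K]
      (↥(LinearMap.ker (T ^ (n + 1))) ⧸ p₁) := p₁.mkQ.comp f with hφ
  have hker : LinearMap.ker φ = p₂ := by
    ext x
    simp only [hφ, LinearMap.mem_ker, LinearMap.comp_apply, Submodule.mkQ_apply,
      Submodule.Quotient.mk_eq_zero, p₁, p₂, Submodule.mem_comap, LinearMap.mem_ker]
    constructor
    · intro h
      have : (T ^ n) (f x : X) = 0 := h
      have hfx : (f x : X) = T x := rfl
      rw [hfx] at this
      have : (T ^ n * T) ((x : X)) = 0 := this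
      rw [← pow_succ] at this
      exact this
    · intro h
      show (T ^ n) (f x : X) = 0
      have hfx : (f x : X) = T x := rfl
      rw [hfx]
      have : (T ^ n * T) ((x : X)) = 0 := by rw [← pow_succ]; exact h
      exact this
  set g := p₂.liftQ φ (le_of_eq hker.symm) with hg
  have hinj : Function.Injective g := by
    rw [← LinearMap.ker_eq_bot, hg, Submodule.ker_liftQ_eq_bot']
    exact hker.symm
  exact LinearMap.rank_le_of_injective g hinj
end

section
/- For a linear operator T on a vector space X, the sequence n ↦ dim(R(T^n)/R(T^{n+1})) is decreasing, i.e. dim(R(T^{n+1})/R(T^{n+2})) ≤ dim(R(T^n)/R(T^{n+1})) for all n. -/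
/-!
Since `R(T^(k+1)) = T(R(T^k))`, the map `T` induces a surjection
`R(T^n)/R(T^(n+1)) → R(T^(n+1))/R(T^(n+2))`, and a surjective linear map does not increase rank.
-/

universe u

open Submodule in
theorem Submodule.rank_map_quotient_le {R : Type*} {M N : Type u} [Ring R] [AddCommGroup M]
    [Module R M] [AddCommGroup N] [Module R N] (f : M →ₗ[R] N) (p q : Submodule R M) :
    Module.rank R (p.map f ⧸ (q.map f).comap (p.map f).subtype) ≤
      Module.rank R (p ⧸ q.comap p.subtype) := by
  refine LinearMap.rank_le_of_surjective
    ((q.comap p.subtype).mapQ _ (f.submoduleMap p) fun _ hx ↦ mem_map_of_mem hx) fun y ↦ ?_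
  obtain ⟨x, rfl⟩ := mkQ_surjective _ y
  obtain ⟨z, rfl⟩ := f.submoduleMap_surjective p x
  exact ⟨mkQ _ z, rfl⟩

theorem Module.End.range_pow_succ {R M : Type*} [Semiring R] [AddCommMonoid M] [Module R M]
    (T : Module.End R M) (n : ℕ) :
    LinearMap.range (T ^ (n + 1)) = (LinearMap.range (T ^ n)).map T := by
  rw [pow_succ', Module.End.mul_eq_comp, LinearMap.range_comp]

/-- The sequence `n ↦ dim (R(T^n) / R(T^{n+1}))` is decreasing. -/
theorem range_quotient_rank_antitone
    {K : Type*} [Field K] {X : Type*} [AddCommGroup X] [Module K X]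
    (T : Module.End K X) (n : ℕ) :
    Module.rank K
      (↥(LinearMap.range (T ^ (n + 1))) ⧸
        (LinearMap.range (T ^ (n + 2))).comap (LinearMap.range (T ^ (n + 1))).subtype) ≤
    Module.rank K
      (↥(LinearMap.range (T ^ n)) ⧸
        (LinearMap.range (T ^ (n + 1))).comap (LinearMap.range (T ^ n)).subtype) := by
  rw [T.range_pow_succ (n + 1), T.range_pow_succ n]
  exact Submodule.rank_map_quotient_le T _ _
end

section
/- For a linear operator T on a vector space X and every n ∈ ℕ₀, the dimension of the quotient (R(T^n) ∩ N(T))/(R(T^{n+1}) ∩ N(T)) equals the dimension of the quotient (R(T) + N(T^{n+1}))/(R(T) + N(T^n)). -/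
/-!
`T ^ n` maps `N(T^{n+1})` onto `R(T^n) ∩ N(T)`, and the preimage of `R(T^{n+1}) ∩ N(T)` in
`N(T^{n+1})` is `N(T^{n+1}) ∩ (R(T) + N(T^n))`. Hence the first quotient is isomorphic to
`N(T^{n+1}) / (N(T^{n+1}) ∩ (R(T) + N(T^n)))`, which by the second isomorphism theorem is
`(R(T) + N(T^{n+1})) / (R(T) + N(T^n))`.
-/

open Submodule LinearMap Module.End

noncomputable def Submodule.quotientComapEquivQuotientMap {R M N : Type*} [Ring R]
    [AddCommGroup M] [Module R M] [AddCommGroup N] [Module R N]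
    (f : M →ₗ[R] N) (p : Submodule R M) (q : Submodule R N) :
    (p ⧸ (q.comap f).comap p.subtype) ≃ₗ[R] (p.map f ⧸ q.comap (p.map f).subtype) :=
  let g := (q.comap (p.map f).subtype).mkQ ∘ₗ f.submoduleMap p
  have hker : ker g = (q.comap f).comap p.subtype := by
    ext x
    simp [g]
  (quotEquivOfEq _ _ hker.symm).trans
    (g.quotKerEquivOfSurjective ((mkQ_surjective _).comp (f.submoduleMap_surjective p)))

namespace Module.End

variable {R M : Type*} [Ring R] [AddCommGroup M] [Module R M]

theorem ker_pow_succ_eq_comap (T : Module.End R M) (n : ℕ) :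
    ker (T ^ (n + 1)) = (ker T).comap (T ^ n) := by
  rw [pow_succ', mul_eq_comp, ker_comp]

theorem ker_pow_le_ker_pow_succ (T : Module.End R M) (n : ℕ) :
    ker (T ^ n) ≤ ker (T ^ (n + 1)) := by
  rw [pow_succ', mul_eq_comp]
  exact ker_le_ker_comp _ _

theorem map_pow_ker_pow_succ (T : Module.End R M) (n : ℕ) :
    (ker (T ^ (n + 1))).map (T ^ n) = range (T ^ n) ⊓ ker T := by
  rw [ker_pow_succ_eq_comap, map_comap_eq]

theorem comap_pow_range_pow_succ (T : Module.End R M) (n : ℕ) :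
    (range (T ^ (n + 1))).comap (T ^ n) = range T ⊔ ker (T ^ n) := by
  rw [pow_succ, mul_eq_comp, range_comp, comap_map_eq]

end Module.End

/-- `dim ((R(T^n) ⊓ N(T)) / (R(T^{n+1}) ⊓ N(T))) = dim ((R(T) ⊔ N(T^{n+1})) / (R(T) ⊔ N(T^n)))`. -/
theorem kn_two_descriptions
    {K : Type*} [Field K] {X : Type*} [AddCommGroup X] [Module K X]
    (T : Module.End K X) (n : ℕ) :
    Module.rank K
      (↥(LinearMap.range (T ^ n) ⊓ LinearMap.ker T) ⧸
        (LinearMap.range (T ^ (n + 1)) ⊓ LinearMap.ker T).comap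
          (LinearMap.range (T ^ n) ⊓ LinearMap.ker T).subtype) =
    Module.rank K
      (↥(LinearMap.range T ⊔ LinearMap.ker (T ^ (n + 1))) ⧸
        (LinearMap.range T ⊔ LinearMap.ker (T ^ n)).comap
          (LinearMap.range T ⊔ LinearMap.ker (T ^ (n + 1))).subtype) := by
  have hpreimage : (range (T ^ (n + 1)) ⊓ ker T).comap (T ^ n) =
      ker (T ^ (n + 1)) ⊓ (range T ⊔ ker (T ^ n)) := by
    rw [comap_inf, comap_pow_range_pow_succ, ← ker_pow_succ_eq_comap, inf_comm]
  have hsup : ker (T ^ (n + 1)) ⊔ (range T ⊔ ker (T ^ n)) = range T ⊔ ker (T ^ (n + 1)) := by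
    rw [sup_left_comm, sup_eq_left.mpr (T.ker_pow_le_ker_pow_succ n)]
  rw [← map_pow_ker_pow_succ,
    ← (quotientComapEquivQuotientMap (T ^ n) _ _).rank_eq, hpreimage, comap_inf,
    (quotientInfEquivSupQuotient _ _).rank_eq, hsup]
end

section
/- For a linear operator T on a vector space X and n ∈ ℕ₀, if dim(N(T^{n+2})/N(T^{n+1})) is finite, then k_n(T) = dim(N(T^{n+1})/N(T^n)) − dim(N(T^{n+2})/N(T^{n+1})), where k_n(T) = dim((R(T^n) ∩ N(T))/(R(T^{n+1}) ∩ N(T))). -/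
/-!
`T ^ n` maps `N(T^{n+1})` onto `R(T^n) ∩ N(T)` with kernel `N(T^n)`, so `c'_n(T)` and
`c'_{n+1}(T)` are the dimensions of `R(T^n) ∩ N(T)` and of its subspace `R(T^{n+1}) ∩ N(T)`.
Hence `k_n(T)` is the codimension of the latter in the former, which rank–nullity computes
as the difference once `c'_{n+1}(T)` is finite.
-/

open LinearMap

universe u

noncomputable def LinearMap.kerCompQuotEquivRangeInfKer {R M N P : Type*} [Ring R]
    [AddCommGroup M] [AddCommGroup N] [AddCommGroup P] [Module R M] [Module R N] [Module R P]
    (f : M →ₗ[R] N) (g : N →ₗ[R] P) :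
    (ker (g ∘ₗ f) ⧸ (ker f).comap (ker (g ∘ₗ f)).subtype) ≃ₗ[R] ↥(range f ⊓ ker g) :=
  let φ : ker (g ∘ₗ f) →ₗ[R] ↥(range f ⊓ ker g) :=
    codRestrict _ (f ∘ₗ (ker (g ∘ₗ f)).subtype) fun x => ⟨mem_range_self f x, x.2⟩
  have hφ : Function.Surjective φ := by
    rintro ⟨_, ⟨x, rfl⟩, hx⟩
    exact ⟨⟨x, hx⟩, rfl⟩
  have hker : ker φ = (ker f).comap (ker (g ∘ₗ f)).subtype :=
    (ker_codRestrict _ _ _).trans (ker_comp _ _)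
  (Submodule.quotEquivOfEq _ _ hker.symm).trans (φ.quotKerEquivOfSurjective hφ)

theorem Module.End.rank_ker_pow_succ_quotient {R M : Type*} [Ring R] [AddCommGroup M]
    [Module R M] (T : Module.End R M) (m : ℕ) :
    Module.rank R (ker (T ^ (m + 1)) ⧸ (ker (T ^ m)).comap (ker (T ^ (m + 1))).subtype) =
      Module.rank R ↥(range (T ^ m) ⊓ ker T) := by
  rw [pow_succ', Module.End.mul_eq_comp]
  exact (kerCompQuotEquivRangeInfKer (T ^ m) T).rank_eq

theorem Module.End.range_pow_succ_le {R M : Type*} [Semiring R] [AddCommMonoid M]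
    [Module R M] (T : Module.End R M) (m : ℕ) : range (T ^ (m + 1)) ≤ range (T ^ m) := by
  rw [pow_succ, Module.End.mul_eq_comp]
  exact range_comp_le_range T (T ^ m)

theorem Submodule.toENat_rank_quotient_comap_subtype {R : Type*} {M : Type u} [Ring R]
    [HasRankNullity.{u} R] [AddCommGroup M] [Module R M] {p q : Submodule R M} (hpq : p ≤ q)
    (hp : Module.rank R p < Cardinal.aleph0) :
    (Module.rank R (q ⧸ p.comap q.subtype)).toENat =
      (Module.rank R q).toENat - (Module.rank R p).toENat := by
  have h := (p.comap q.subtype).rank_quotient_add_rank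
  rw [(comapSubtypeEquivOfLe hpq).rank_eq] at h
  refine (WithTop.addLECancellable_iff_ne_top.2 (Cardinal.toENat_ne_top.2 hp)).eq_tsub_of_add_eq ?_
  rw [← h]
  exact (map_add _ _ _).symm

/-- If `c'_{n+1}(T) = dim (N(T^{n+2})/N(T^{n+1}))` is finite, then
`k_n(T) = c'_n(T) - c'_{n+1}(T)` (as extended natural numbers). -/
theorem kn_eq_cn'_sub
    {K : Type*} [Field K] {X : Type*} [AddCommGroup X] [Module K X]
    (T : Module.End K X) (n : ℕ)
    (hfin : Module.rank K
      (↥(LinearMap.ker (T ^ (n + 2))) ⧸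
        (LinearMap.ker (T ^ (n + 1))).comap (LinearMap.ker (T ^ (n + 2))).subtype)
      < Cardinal.aleph0) :
    Cardinal.toENat (Module.rank K
      (↥(LinearMap.range (T ^ n) ⊓ LinearMap.ker T) ⧸
        (LinearMap.range (T ^ (n + 1)) ⊓ LinearMap.ker T).comap
          (LinearMap.range (T ^ n) ⊓ LinearMap.ker T).subtype)) =
    Cardinal.toENat (Module.rank K
      (↥(LinearMap.ker (T ^ (n + 1))) ⧸
        (LinearMap.ker (T ^ n)).comap (LinearMap.ker (T ^ (n + 1))).subtype)) -
    Cardinal.toENat (Module.rank K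
      (↥(LinearMap.ker (T ^ (n + 2))) ⧸
        (LinearMap.ker (T ^ (n + 1))).comap (LinearMap.ker (T ^ (n + 2))).subtype)) := by
  rw [T.rank_ker_pow_succ_quotient (n + 1)] at hfin ⊢
  rw [T.rank_ker_pow_succ_quotient n]
  exact Submodule.toENat_rank_quotient_comap_subtype
    (inf_le_inf_right _ (T.range_pow_succ_le n)) hfin
end

section
/- Let X be a Banach space, T : X → X a bounded linear operator, and d ∈ ℕ. If N(T^d) + R(T^n) is a closed subspace of X and N(T^d) ∩ R(T^n) is finite dimensional, then R(T^n) is closed. -/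
/-!
Let `K = N(T^d)` and `R = R(T^n)`. The map `(x, k) ↦ T^n x + k` from the Banach space `X × K`
onto the Banach space `K + R` is open by the open mapping theorem, hence a quotient map. The
preimage of `R` under it is `X × (K ∩ R)`, which is closed since `K ∩ R` is finite dimensional;
so `R` is closed in `K + R`, and therefore in `X`.
-/

open Function

section

variable {𝕜 E F : Type*} [NontriviallyNormedField 𝕜]
  [NormedAddCommGroup E] [NormedSpace 𝕜 E] [CompleteSpace E]
  [NormedAddCommGroup F] [NormedSpace 𝕜 F] [CompleteSpace F]

theorem ContinuousLinearMap.isClosed_range_of_isClosed_sup_of_isClosed_inf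
    (S : E →L[𝕜] F) {K : Submodule 𝕜 F} (hK : IsClosed (K : Set F))
    (hsup : IsClosed ((K ⊔ LinearMap.range (S : E →ₗ[𝕜] F) : Submodule 𝕜 F) : Set F))
    (hinf : IsClosed ((K ⊓ LinearMap.range (S : E →ₗ[𝕜] F) : Submodule 𝕜 F) : Set F)) :
    IsClosed (LinearMap.range (S : E →ₗ[𝕜] F) : Set F) := by
  set R := LinearMap.range (S : E →ₗ[𝕜] F)
  set M := K ⊔ R
  have : CompleteSpace K := hK.completeSpace_coe
  have : CompleteSpace M := hsup.completeSpace_coe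
  let B : E × K →L[𝕜] M := (S.coprod K.subtypeL).codRestrict M fun z =>
    M.add_mem (Submodule.mem_sup_right ⟨z.1, rfl⟩) (Submodule.mem_sup_left z.2.2)
  have hB : Surjective B := by
    rintro ⟨_, hm⟩
    obtain ⟨k, hk, _, ⟨x, rfl⟩, rfl⟩ := Submodule.mem_sup.mp hm
    exact ⟨(x, ⟨k, hk⟩), Subtype.ext (add_comm _ _)⟩
  have hpre : B ⁻¹' (Subtype.val ⁻¹' (R : Set F)) =
      (fun z : E × K => (z.2 : F)) ⁻¹' (K ⊓ R : Submodule 𝕜 F) := by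
    ext ⟨x, k⟩
    show S x + (k : F) ∈ R ↔ (k : F) ∈ K ⊓ R
    rw [Submodule.mem_inf, and_iff_right k.2]
    exact R.add_mem_iff_right ⟨x, rfl⟩
  have hRM : IsClosed (Subtype.val ⁻¹' (R : Set F) : Set M) :=
    (B.isQuotientMap hB).isClosed_preimage.mp (hpre ▸ hinf.preimage (by fun_prop))
  have hRsub : (R : Set F) ⊆ M := le_sup_right (a := K)
  convert hRM.trans hsup using 1
  exact ((Subtype.image_preimage_coe (M : Set F) R).trans (Set.inter_eq_right.mpr hRsub)).symm

end

/-- If `N(T^d) + R(T^n)` is closed and `N(T^d) ⊓ R(T^n)` is finite dimensional,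
then `R(T^n)` is closed. -/
theorem range_pow_isClosed_of_sup_isClosed
    {X : Type*} [NormedAddCommGroup X] [NormedSpace ℂ X] [CompleteSpace X]
    (T : X →L[ℂ] X) (d n : ℕ)
    (hsup : IsClosed ((LinearMap.ker ((T ^ d : X →L[ℂ] X) : X →ₗ[ℂ] X) ⊔ LinearMap.range ((T ^ n : X →L[ℂ] X) : X →ₗ[ℂ] X) : Submodule ℂ X) : Set X))
    (hinf : FiniteDimensional ℂ ↥(LinearMap.ker ((T ^ d : X →L[ℂ] X) : X →ₗ[ℂ] X) ⊓ LinearMap.range ((T ^ n : X →L[ℂ] X) : X →ₗ[ℂ] X))) :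
    IsClosed ((LinearMap.range ((T ^ n : X →L[ℂ] X) : X →ₗ[ℂ] X) : Submodule ℂ X) : Set X) :=
  (T ^ n).isClosed_range_of_isClosed_sup_of_isClosed_inf (T ^ d).isClosed_ker hsup
    (Submodule.closed_of_finiteDimensional _)
end

section
/- Let K and H be compact subsets of ℂ with ∂K ⊆ H ⊆ K. Then the connected hull of K equals the connected hull of H, where the connected hull ηK of a compact set K is the complement of the unbounded connected component of ℂ \ K. -/
/-- The connected hull of a compact set `K ⊆ ℂ`: the complement of the unbounded
connected component of `ℂ \ K`, i.e. the set of points whose connected component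
in `Kᶜ` is bounded (points of `K` have empty, hence bounded, component). -/
def connectedHull (K : Set ℂ) : Set ℂ :=
  {z : ℂ | Bornology.IsBounded (connectedComponentIn Kᶜ z)}

/-- If `K, H ⊆ ℂ` are compact with `∂K ⊆ H ⊆ K`, then `ηK = ηH`. -/
theorem connectedHull_eq_of_between
    (K H : Set ℂ) (hK : IsCompact K) (hH : IsCompact H)
    (h1 : frontier K ⊆ H) (h2 : H ⊆ K) :
    connectedHull K = connectedHull H := by
  ext z
  simp only [connectedHull, Set.mem_setOf_eq]
  constructor
  · -- bounded component in Kᶜ ⇒ bounded component in Hᶜ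
    intro hb
    by_cases hz : z ∈ Hᶜ
    · set D := connectedComponentIn Hᶜ z with hD
      have hzD : z ∈ D := mem_connectedComponentIn hz
      have hDH : D ⊆ Hᶜ := connectedComponentIn_subset _ _
      have hDfr : D ⊆ interior K ∪ interior Kᶜ := by
        intro w hw
        have hwH : w ∉ H := hDH hw
        have hwfr : w ∉ frontier K := fun h => hwH (h1 h)
        rcases Classical.em (w ∈ closure K) with hc | hc
        · exact Or.inl (by
            rcases Classical.em (w ∈ interior K) with h | h
            · exact h
            · exact absurd ⟨hc, h⟩ hwfr)
        · exact Or.inr (by rwa [interior_compl, Set.mem_compl_iff])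
      have hpc : IsPreconnected D := isPreconnected_connectedComponentIn
      have hdisj : Disjoint (interior K) (interior Kᶜ) := by
        refine Set.disjoint_left.mpr fun w hw hw' => ?_
        exact (interior_subset hw' : w ∈ Kᶜ) (interior_subset hw)
      by_cases hzK : z ∈ K
      · have hzint : z ∈ interior K := by
          rcases Classical.em (z ∈ interior K) with h | h
          · exact h
          · exact absurd (h1 ⟨subset_closure hzK, h⟩) hz
        have : D ⊆ interior K :=
          hpc.subset_left_of_subset_union isOpen_interior isOpen_interior hdisj hDfr
            ⟨z, hzD, hzint⟩
        exact (hK.isBounded).subset (this.trans interior_subset)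
      · have hzint : z ∈ interior Kᶜ := by
          rw [interior_compl, Set.mem_compl_iff]
          intro hc
          rcases Classical.em (z ∈ interior K) with h | h
          · exact hzK (interior_subset h)
          · exact hz (h1 ⟨hc, h⟩)
        have hDK : D ⊆ Kᶜ := by
          have : D ⊆ interior Kᶜ :=
            hpc.subset_right_of_subset_union isOpen_interior isOpen_interior hdisj hDfr
              ⟨z, hzD, hzint⟩
          exact this.trans interior_subset
        exact hb.subset (hpc.subset_connectedComponentIn hzD hDK)
    · rw [connectedComponentIn_eq_empty hz]
      exact Bornology.isBounded_empty
  · intro hb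
    exact hb.subset (connectedComponentIn_mono z (Set.compl_subset_compl.mpr h2))
end

section
/- Let K, H be compact subsets of ℂ with ∂K ⊆ H ⊆ K. If H is countable, then H = K, and in particular K is countable. -/
/-!
A countable set does not disconnect the plane, so `Hᶜ` is connected. It meets the complement of
the bounded set `K`, so if it also met `K` it would have to meet `∂K ⊆ H`; hence `K ⊆ H`.
-/

open Set

theorem IsPreconnected.inter_frontier_nonempty {X : Type*} [TopologicalSpace X] {s t : Set X}
    (hs : IsPreconnected s) (hst : (s ∩ t).Nonempty) (hst' : (s \ t).Nonempty) :
    (s ∩ frontier t).Nonempty := by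
  by_contra h
  have hcover : s ⊆ interior t ∪ (closure t)ᶜ := fun z hz => by
    by_cases hzt : z ∈ closure t
    · exact .inl <| by_contra fun hzi => h ⟨z, hz, hzt, hzi⟩
    · exact .inr hzt
  obtain ⟨x, hxs, hxt⟩ := hst
  obtain ⟨y, hys, hyt⟩ := hst'
  have hx : x ∈ interior t := (hcover hxs).resolve_right (not_not_intro (subset_closure hxt))
  have hy : y ∈ (closure t)ᶜ := (hcover hys).resolve_left fun hyi => hyt (interior_subset hyi)
  obtain ⟨z, -, hzi, hzc⟩ :=
    hs _ _ isOpen_interior isClosed_closure.isOpen_compl hcover ⟨x, hxs, hx⟩ ⟨y, hys, hy⟩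
  exact hzc (interior_subset_closure hzi)

theorem eq_of_frontier_subset_of_isPreconnected_compl {X : Type*} [TopologicalSpace X]
    {K H : Set X} (h1 : frontier K ⊆ H) (h2 : H ⊆ K) (hconn : IsPreconnected Hᶜ)
    (hK : K ≠ univ) : H = K := by
  refine h2.antisymm fun x hxK => by_contra fun hxH => ?_
  obtain ⟨y, hyK⟩ := (ne_univ_iff_exists_notMem K).mp hK
  obtain ⟨z, hzH, hzK⟩ :=
    hconn.inter_frontier_nonempty ⟨x, hxH, hxK⟩ ⟨y, fun hyH => hyK (h2 hyH), hyK⟩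
  exact hzH (h1 hzK)

theorem eq_of_countable_between_general
    (K H : Set ℂ) (hK : IsCompact K)
    (h1 : frontier K ⊆ H) (h2 : H ⊆ K) (hcount : H.Countable) :
    H = K ∧ K.Countable := by
  have hconn : IsConnected Hᶜ :=
    hcount.isConnected_compl_of_one_lt_rank (by simp [Complex.rank_real_complex])
  have hHK : H = K :=
    eq_of_frontier_subset_of_isPreconnected_compl h1 h2 hconn.isPreconnected hK.ne_univ
  exact ⟨hHK, hHK ▸ hcount⟩

/-- If `K, H ⊆ ℂ` are compact with `∂K ⊆ H ⊆ K` and `H` is countable, then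
`H = K`; in particular `K` is countable. -/
theorem eq_of_countable_between
    (K H : Set ℂ) (hK : IsCompact K) (hH : IsCompact H)
    (h1 : frontier K ⊆ H) (h2 : H ⊆ K) (hcount : H.Countable) :
    H = K ∧ K.Countable :=
  eq_of_countable_between_general K H hK h1 h2 hcount
end

section
/- Let K, H be compact subsets of ℂ with ∂K ⊆ H ⊆ K. If H is contained in a (real affine) line in ℂ, then H = K. -/
/-- A ray from a point of a compact set hits the frontier. -/
lemma ray_hits_frontier (K : Set ℂ) (hK : IsCompact K) (z d : ℂ) (hd : d ≠ 0)
    (hz : z ∈ K) : ∃ s : ℝ, 0 ≤ s ∧ z + s • d ∈ frontier K := by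
  have hcont : Continuous fun s : ℝ => z + s • d := by continuity
  set S : Set ℝ := {s | 0 ≤ s} ∩ (fun s : ℝ => z + s • d) ⁻¹' K with hS
  have hSc : IsClosed S :=
    (isClosed_le continuous_const continuous_id).inter (hK.isClosed.preimage hcont)
  have hS0 : (0:ℝ) ∈ S := by
    refine ⟨by simp, ?_⟩
    simpa using hz
  obtain ⟨R, hR⟩ := hK.isBounded.exists_norm_le
  have hbdd : BddAbove S := by
    refine ⟨(R + ‖z‖) / ‖d‖, fun s hs => ?_⟩
    have h1 : ‖z + s • d‖ ≤ R := hR _ hs.2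
    have h2 : s * ‖d‖ = ‖s • d‖ := by
      rw [norm_smul, Real.norm_eq_abs, abs_of_nonneg hs.1]
    have h3 : ‖s • d‖ ≤ ‖z + s • d‖ + ‖z‖ := by
      have := norm_sub_le (z + s • d) z
      simpa using this
    have h4 : s * ‖d‖ ≤ R + ‖z‖ := by
      rw [h2]; exact h3.trans (by linarith)
    have hdpos : 0 < ‖d‖ := norm_pos_iff.mpr hd
    rw [le_div_iff₀ hdpos]; exact h4
  have hmem : sSup S ∈ S := hSc.csSup_mem ⟨0, hS0⟩ hbdd
  refine ⟨sSup S, hmem.1, ?_⟩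
  rw [frontier, hK.isClosed.closure_eq]
  refine ⟨hmem.2, fun hint => ?_⟩
  have hopen : IsOpen ((fun s : ℝ => z + s • d) ⁻¹' interior K) :=
    isOpen_interior.preimage hcont
  rw [Metric.isOpen_iff] at hopen
  obtain ⟨δ, hδ, hball⟩ := hopen (sSup S) hint
  have hsup0 : (0:ℝ) ≤ sSup S := hmem.1
  have hmem2 : sSup S + δ / 2 ∈ S := by
    refine ⟨by simp only [Set.mem_setOf_eq]; linarith, ?_⟩
    have hball' : sSup S + δ / 2 ∈ Metric.ball (sSup S) δ := by
      rw [Metric.mem_ball, Real.dist_eq]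
      rw [abs_of_nonneg (by linarith)]
      linarith
    have h5 : z + (sSup S + δ / 2) • d ∈ interior K := hball hball'
    exact Set.mem_preimage.mpr (interior_subset h5)
  have := le_csSup hbdd hmem2
  linarith

/-- If `K, H ⊆ ℂ` are compact with `∂K ⊆ H ⊆ K` and `H` is contained in a real
affine line `{a + t • b : t ∈ ℝ}` with `b ≠ 0`, then `H = K`. -/
theorem eq_of_subset_line
    (K H : Set ℂ) (hK : IsCompact K) (hH : IsCompact H)
    (h1 : frontier K ⊆ H) (h2 : H ⊆ K)
    (a b : ℂ) (hb : b ≠ 0) (hline : H ⊆ {z : ℂ | ∃ t : ℝ, z = a + t • b}) :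
    H = K := by
  refine Set.Subset.antisymm h2 fun z hz => ?_
  by_contra hzH
  -- choose a direction d such that the ray z + s•d (s ≥ 0) avoids H
  by_cases hzl : ∃ t : ℝ, z = a + t • b
  · -- z is on the line: go perpendicular
    obtain ⟨t₀, ht₀⟩ := hzl
    have hd : Complex.I * b ≠ 0 := mul_ne_zero Complex.I_ne_zero hb
    obtain ⟨s, hs0, hsf⟩ := ray_hits_frontier K hK z (Complex.I * b) hd hz
    have hmem := h1 hsf
    obtain ⟨t, ht⟩ := hline hmem
    -- z + s•(I*b) = a + t•b  →  t₀ + s*I = t  →  s = 0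
    have hb' : (t₀ : ℂ) + s * Complex.I = t := by
      have : ((t₀ : ℂ) + s * Complex.I) * b = (t : ℂ) * b := by
        rw [ht₀] at ht
        have : a + (t₀ : ℝ) • b + s • (Complex.I * b) = a + (t : ℝ) • b := ht
        simp only [Complex.real_smul] at this
        ring_nf
        ring_nf at this
        linear_combination this
      exact mul_right_cancel₀ hb this
    have hs_eq : s = 0 := by
      have := congrArg Complex.im hb'
      simpa using this
    -- then the frontier point is z itself, contradicting z ∉ H
    rw [hs_eq] at hsf
    simp at hsf
    exact hzH (h1 hsf)
  · -- z is off the line: go parallel to b; the ray never meets the line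
    obtain ⟨s, hs0, hsf⟩ := ray_hits_frontier K hK z b hb hz
    have hmem := h1 hsf
    obtain ⟨t, ht⟩ := hline hmem
    have ht' : z + (s:ℂ) * b = a + (t:ℂ) * b := by simpa [Complex.real_smul] using ht
    refine hzl ⟨t - s, ?_⟩
    simp only [Complex.real_smul]
    push_cast
    linear_combination ht'
end

section
/- For a compact set K ⊆ ℂ and a point λ ∈ ∂K, λ is an accumulation point of K if and only if λ is an accumulation point of ∂K. -/
open Set Metric

private lemma rank_lt : (1 : Cardinal) < Module.rank ℝ ℂ := by
  rw [Complex.rank_real_complex]; exact Cardinal.one_lt_two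

/-- For a compact `K ⊆ ℂ` and `λ ∈ ∂K`: `λ` is an accumulation point of `K`
iff it is an accumulation point of `∂K`. -/
theorem acc_frontier_iff
    (K : Set ℂ) (hK : IsCompact K) (lam : ℂ) (hlam : lam ∈ frontier K) :
    lam ∈ closure (K \ {lam}) ↔ lam ∈ closure (frontier K \ {lam}) := by
  have hKc : IsClosed K := hK.isClosed
  have hfK : frontier K ⊆ K := hKc.frontier_subset
  constructor
  · intro h
    by_contra hnot
    rw [Metric.mem_closure_iff] at hnot
    push_neg at hnot
    obtain ⟨ε, hε, hmin⟩ := hnot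
    -- punctured ball avoids frontier K
    have hpunct : ∀ y : ℂ, y ≠ lam → dist lam y < ε → y ∉ frontier K := by
      intro y hy hd hf
      exact absurd (hmin y ⟨hf, hy⟩) (not_le.2 hd)
    -- dichotomy for spheres
    have hdichot : ∀ r ∈ Ioo (0:ℝ) ε, (sphere lam r ∩ interior K).Nonempty →
        sphere lam r ⊆ interior K := by
      intro r hr hne
      apply (isPreconnected_sphere rank_lt lam r).subset_left_of_subset_union
        isOpen_interior hKc.isOpen_compl ?_ ?_ hne
      · exact disjoint_compl_right.mono_left interior_subset
      · intro y hy
        have hyl : y ≠ lam := by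
          intro h'; rw [h', mem_sphere, dist_self] at hy; exact hr.1.ne hy
        have hdy : dist lam y < ε := by
          rw [dist_comm]; rw [mem_sphere] at hy; rw [hy]; exact hr.2
        have hnf := hpunct y hyl hdy
        rw [hKc.frontier_eq, mem_diff, not_and, not_not] at hnf
        by_cases hc : y ∈ K
        · exact Or.inl (hnf hc)
        · exact Or.inr hc
    -- a nearby point of K is in the interior
    obtain ⟨x, hx, hdx⟩ := Metric.mem_closure_iff.1 h ε hε
    have hxl : x ≠ lam := hx.2
    have hxi : x ∈ interior K := by
      have hnf := hpunct x hxl hdx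
      rw [hKc.frontier_eq, mem_diff, not_and, not_not] at hnf
      exact hnf hx.1
    set r0 : ℝ := dist lam x with hr0
    have hr0mem : r0 ∈ Ioo (0:ℝ) ε := ⟨dist_pos.2 (fun h' => hxl h'.symm), hdx⟩
    have hs0 : sphere lam r0 ⊆ interior K :=
      hdichot r0 hr0mem ⟨x, by rw [mem_sphere, dist_comm], hxi⟩
    -- interval connectedness for the radius map
    set f : ℝ → ℂ := fun t => lam + (t : ℂ) with hf
    have hfc : Continuous f := continuous_const.add Complex.continuous_ofReal
    have hfs : ∀ t ∈ Ioo (0:ℝ) ε, f t ∈ sphere lam t := by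
      intro t ht
      simp only [f, mem_sphere, add_sub_cancel_left]
      rw [dist_eq_norm, add_sub_cancel_left, Complex.norm_real,
        Real.norm_eq_abs, abs_of_pos ht.1]
    have hIoo : Ioo (0:ℝ) ε ⊆ f ⁻¹' interior K := by
      apply isPreconnected_Ioo.subset_left_of_subset_union
        (isOpen_interior.preimage hfc) (hKc.isOpen_compl.preimage hfc)
      · exact (disjoint_compl_right.mono_left interior_subset).preimage f
      · intro t ht
        have htl : f t ≠ lam := by
          simp only [f, ne_eq, add_eq_left, Complex.ofReal_eq_zero]
          exact ht.1.ne'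
        have hdt : dist lam (f t) < ε := by
          rw [dist_comm, (hfs t ht)]; exact ht.2
        have hnf := hpunct (f t) htl hdt
        rw [hKc.frontier_eq, mem_diff, not_and, not_not] at hnf
        by_cases hc : f t ∈ K
        · exact Or.inl (hnf hc)
        · exact Or.inr hc
      · exact ⟨r0, hr0mem, hs0 (hfs r0 hr0mem)⟩
    -- the whole ball is inside K
    have hball : ball lam ε ⊆ K := by
      intro y hy
      by_cases hyl : y = lam
      · rw [hyl]; exact hfK hlam
      · set t : ℝ := dist lam y with ht
        have htmem : t ∈ Ioo (0:ℝ) ε := ⟨dist_pos.2 (fun h' => hyl h'.symm), by rw [ht, dist_comm]; exact mem_ball.1 hy⟩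
        have : sphere lam t ⊆ interior K :=
          hdichot t htmem ⟨f t, hfs t htmem, hIoo htmem⟩
        exact interior_subset (this (by rw [mem_sphere, dist_comm]))
    have : lam ∈ interior K := interior_maximal hball isOpen_ball (mem_ball_self hε)
    rw [hKc.frontier_eq] at hlam
    exact hlam.2 this
  · intro h
    exact closure_mono (diff_subset_diff_left hfK) h
end

section
/- Let X be a vector space and T : X → X a linear map. If for some d ∈ ℕ₀ one has R(T) + N(T^{d}) = R(T) + N(T^{n}) for all n ≥ d (uniform descent for n ≥ d), then the induced quantities k_n(T) = dim((R(T^n) ∩ N(T))/(R(T^{n+1}) ∩ N(T))) vanish for all n ≥ d. -/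
namespace Module.End

variable {R M : Type*} [Semiring R] [AddCommMonoid M] [Module R M]

/-- If `x = T^n y` with `T x = 0`, then `y ∈ N(T^{n+1})`; splitting `y = T z + b` with
`T^n b = 0` gives `x = T^{n+1} z`. -/
theorem range_pow_inf_ker_le_range_pow_succ (T : End R M) {n : ℕ}
    (hker : LinearMap.ker (T ^ (n + 1)) ≤ LinearMap.range T ⊔ LinearMap.ker (T ^ n)) :
    LinearMap.range (T ^ n) ⊓ LinearMap.ker T ≤ LinearMap.range (T ^ (n + 1)) := by
  rintro x ⟨⟨y, rfl⟩, hTx⟩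
  have hy : y ∈ LinearMap.ker (T ^ (n + 1)) := by
    rwa [LinearMap.mem_ker, pow_succ', mul_apply]
  obtain ⟨_, ⟨z, rfl⟩, b, hb, rfl⟩ := Submodule.mem_sup.mp (hker hy)
  refine ⟨z, ?_⟩
  rw [map_add, LinearMap.mem_ker.mp hb, add_zero, pow_succ, mul_apply]

end Module.End

theorem Submodule.rank_quotient_comap_subtype_eq_zero {R M : Type*} [Ring R] [Nontrivial R]
    [AddCommGroup M] [Module R M] {p q : Submodule R M} (hpq : p ≤ q) :
    Module.rank R (p ⧸ q.comap p.subtype) = 0 := by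
  rw [comap_subtype_eq_top.mpr hpq]
  exact rank_subsingleton' R _

/-- If `R(T) + N(T^n) = R(T) + N(T^d)` for all `n ≥ d` (uniform descent for
`n ≥ d`), then `k_n(T) = dim ((R(T^n) ⊓ N(T)) / (R(T^{n+1}) ⊓ N(T))) = 0` for
all `n ≥ d`. -/
theorem kn_eq_zero_of_uniform_descent
    {K : Type*} [Field K] {X : Type*} [AddCommGroup X] [Module K X]
    (T : Module.End K X) (d : ℕ)
    (h : ∀ n ≥ d, LinearMap.range T ⊔ LinearMap.ker (T ^ n) =
        LinearMap.range T ⊔ LinearMap.ker (T ^ d)) :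
    ∀ n ≥ d, Module.rank K
      (↥(LinearMap.range (T ^ n) ⊓ LinearMap.ker T) ⧸
        (LinearMap.range (T ^ (n + 1)) ⊓ LinearMap.ker T).comap
          (LinearMap.range (T ^ n) ⊓ LinearMap.ker T).subtype) = 0 := by
  intro n hn
  have hker : LinearMap.ker (T ^ (n + 1)) ≤ LinearMap.range T ⊔ LinearMap.ker (T ^ n) := by
    rw [h n hn, ← h (n + 1) (by omega)]
    exact le_sup_right
  exact Submodule.rank_quotient_comap_subtype_eq_zero
    (le_inf (T.range_pow_inf_ker_le_range_pow_succ hker) inf_le_right)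
end
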